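/- For coprime positive integers p_1 > p_2, there are exactly p_1 − p_2 + 1 distinct apportionment sequences over cut points c ∈ [0,1] for the two-party stationary divisor methods. -/

import Mathlib

open ENNReal

/-- Number of seats party `i` holds after the first `h` seats of sequence `s`. -/
def alloc {n : ℕ} (s : ℕ → Fin n) (i : Fin n) (h : ℕ) : ℕ :=
  ((Finset.range h).filter (fun t => s t = i)).card

/-- `s` is the apportionment sequence of the stationary divisor method with cut
point `c` for votes `p`: each seat goes to the party maximizing `pᵢ/(aᵢ+c)`
(computed in `ℝ≥0∞`, so that `pᵢ/0 = ∞` encodes the Adams convention), with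
ties broken in favor of the smaller index. -/
def IsStationarySeq {n : ℕ} (p : Fin n → ℕ) (c : NNReal) (s : ℕ → Fin n) : Prop :=
  ∀ h : ℕ, ∀ j : Fin n,
    (p j : ℝ≥0∞) / ((alloc s j h : ℝ≥0∞) + (c : ℝ≥0∞)) <
        (p (s h) : ℝ≥0∞) / ((alloc s (s h) h : ℝ≥0∞) + (c : ℝ≥0∞)) ∨
    ((p (s h) : ℝ≥0∞) / ((alloc s (s h) h : ℝ≥0∞) + (c : ℝ≥0∞)) =
        (p j : ℝ≥0∞) / ((alloc s j h : ℝ≥0∞) + (c : ℝ≥0∞)) ∧ s h ≤ j)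


/-!
For two parties the seat rule compares `p₂ / (b + c)` with `p₁ / (a + c)`. Cross-multiplying, the cut
point enters only through the integer `k = ⌊c (p₁ - p₂)⌋ ∈ [0, p₁ - p₂]`, and the first party gets the
next seat iff `(p₁ + p₂) a ≤ k + p₁ h`. The quantity `k + p₁ h - (p₁ + p₂) a` then drops by `p₂` or
rises by `p₁`, so it stays in `[-p₂, p₁)` and is `(k + p₁ h + p₂) mod (p₁ + p₂) - p₂`: the sequence
codes the rotation by `p₁` of `ℤ/(p₁ + p₂)` started at `k`. As `p₁` is a unit modulo `p₁ + p₂`, some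
`h` puts this quantity at `-1` for `k`, and then at `k' - k - 1 ≥ 0` for any `k' ∈ (k, k + p₁]`, so
the `p₁ - p₂ + 1` admissible values of `k` give distinct sequences.
-/

open scoped NNReal

lemma alloc_succ {n : ℕ} (s : ℕ → Fin n) (i : Fin n) (h : ℕ) :
    alloc s i (h + 1) = alloc s i h + if s h = i then 1 else 0 := by
  unfold alloc
  rw [Finset.range_add_one, Finset.filter_insert]
  split
  · rw [Finset.card_insert_of_notMem (by simp)]
  · rw [add_zero]

lemma sum_alloc {n : ℕ} (s : ℕ → Fin n) (h : ℕ) : ∑ i, alloc s i h = h := by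
  unfold alloc
  rw [← Finset.card_eq_sum_card_fiberwise (by simp), Finset.card_range]

lemma alloc_zero_add_alloc_one (s : ℕ → Fin 2) (h : ℕ) : alloc s 0 h + alloc s 1 h = h := by
  simpa [Fin.sum_univ_two] using sum_alloc s h

lemma isStationarySeq_two_iff (p : Fin 2 → ℕ) (c : ℝ≥0) (s : ℕ → Fin 2) :
    IsStationarySeq p c s ↔ ∀ h, s h =
      if (p 1 : ℝ≥0∞) / (alloc s 1 h + c) ≤ p 0 / (alloc s 0 h + c) then 0 else 1 := by
  refine forall_congr' fun h => ?_
  rw [Fin.forall_fin_two]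
  obtain hs | hs : s h = 0 ∨ s h = 1 := by omega
  · simpa [hs, eq_comm] using (le_iff_lt_or_eq (a := (p 1 : ℝ≥0∞) / (alloc s 1 h + c))).symm
  · simp [hs]

lemma ENNReal.coe_div_le_coe_div_iff {a b x y : ℝ≥0} (ha : a ≠ 0) (hb : b ≠ 0) :
    (b : ℝ≥0∞) / y ≤ a / x ↔ b * x ≤ a * y := by
  rcases eq_or_ne x 0 with rfl | hx
  · simp [ENNReal.div_zero, ha]
  rcases eq_or_ne y 0 with rfl | hy
  · simp [ENNReal.div_zero, ENNReal.div_eq_top, hb, hx]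
  rw [← ENNReal.coe_div hy, ← ENNReal.coe_div hx, ENNReal.coe_le_coe,
    div_le_div_iff₀ (pos_iff_ne_zero.2 hy) (pos_iff_ne_zero.2 hx)]

lemma div_le_div_iff_le_floor {p1 p2 : ℕ} (hp1 : p1 ≠ 0) (hp2 : p2 ≠ 0) (c : ℝ≥0)
    {a b h : ℕ} (hab : a + b = h) :
    (p2 : ℝ≥0∞) / (b + c) ≤ p1 / (a + c) ↔
      ((p1 : ℤ) + p2) * a ≤ ⌊(c : ℝ) * ((p1 - p2 : ℤ) : ℝ)⌋ + p1 * h := by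
  have key := ENNReal.coe_div_le_coe_div_iff (a := p1) (b := p2) (x := a + c) (y := b + c)
    (by exact_mod_cast hp1) (by exact_mod_cast hp2)
  push_cast at key
  rw [key, ← NNReal.coe_le_coe, ← sub_le_iff_le_add, Int.le_floor]
  subst hab
  push_cast
  constructor <;> intro h <;> linarith

def seatRule (p q k : ℤ) (s : ℕ → Fin 2) (h : ℕ) : Fin 2 :=
  if (p + q) * alloc s 0 h ≤ k + p * h then 0 else 1

lemma isStationarySeq_iff_seatRule {p1 p2 : ℕ} (hp1 : p1 ≠ 0) (hp2 : p2 ≠ 0) (c : ℝ≥0)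
    (s : ℕ → Fin 2) :
    IsStationarySeq ![p1, p2] c s ↔
      ∀ h, s h = seatRule p1 p2 ⌊(c : ℝ) * ((p1 - p2 : ℤ) : ℝ)⌋ s h := by
  rw [isStationarySeq_two_iff]
  refine forall_congr' fun h => ?_
  simp only [seatRule, Matrix.cons_val_zero, Matrix.cons_val_one, Matrix.cons_val_zero,
    div_le_div_iff_le_floor hp1 hp2 c (alloc_zero_add_alloc_one s h)]

def rotationSeq (p q k : ℤ) (h : ℕ) : Fin 2 :=
  if q ≤ (k + p * h + q) % (p + q) then 0 else 1

section RotationSeq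

variable {p q k : ℤ} {s : ℕ → Fin 2}

lemma seatRule_deficit_mem_Ico (hp : 0 ≤ p) (hq : 0 ≤ q) (hk : k ∈ Set.Ico (-q) p) {h : ℕ}
    (hs : ∀ t < h, s t = seatRule p q k s t) :
    k + p * h - (p + q) * alloc s 0 h ∈ Set.Ico (-q) p := by
  induction h with
  | zero => simpa [alloc] using hk
  | succ h ih =>
    obtain ⟨hlo, hhi⟩ := ih fun t ht => hs t (by omega)
    rw [alloc_succ, hs h (by omega), seatRule]
    by_cases hseat : (p + q) * alloc s 0 h ≤ k + p * h
    · rw [if_pos hseat, if_pos rfl]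
      push_cast
      constructor <;> linarith
    · rw [if_neg hseat, if_neg (by decide)]
      push_cast
      constructor <;> linarith

lemma emod_eq_of_seatRule (hp : 0 ≤ p) (hq : 0 ≤ q) (hk : k ∈ Set.Ico (-q) p) {h : ℕ}
    (hs : ∀ t < h, s t = seatRule p q k s t) :
    (k + p * h + q) % (p + q) = k + p * h + q - (p + q) * alloc s 0 h := by
  obtain ⟨hlo, hhi⟩ := seatRule_deficit_mem_Ico hp hq hk hs
  exact ((Int.ediv_emod_unique (q := (alloc s 0 h : ℤ)) (by linarith)).2
    ⟨by ring, by linarith, by linarith⟩).2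

lemma seatRule_eq_rotationSeq (hp : 0 ≤ p) (hq : 0 ≤ q) (hk : k ∈ Set.Ico (-q) p) {h : ℕ}
    (hs : ∀ t < h, s t = seatRule p q k s t) :
    seatRule p q k s h = rotationSeq p q k h := by
  rw [seatRule, rotationSeq, emod_eq_of_seatRule hp hq hk hs]
  exact if_congr (by omega) rfl rfl

lemma forall_eq_seatRule_iff (hp : 0 ≤ p) (hq : 0 ≤ q) (hk : k ∈ Set.Ico (-q) p) :
    (∀ h, s h = seatRule p q k s h) ↔ s = rotationSeq p q k := by
  constructor
  · intro hs
    funext h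
    rw [hs h, seatRule_eq_rotationSeq hp hq hk fun t _ => hs t]
  · rintro rfl h
    induction h using Nat.strong_induction_on with
    | _ h ih => exact (seatRule_eq_rotationSeq hp hq hk ih).symm

lemma IsCoprime.exists_nat_mul_modEq {n : ℤ} (hpn : IsCoprime p n) (hn : 0 < n) (t : ℤ) :
    ∃ h : ℕ, p * h ≡ t [ZMOD n] := by
  obtain ⟨u, v, huv⟩ := hpn
  refine ⟨((u * t) % n).toNat, ?_⟩
  rw [Int.toNat_of_nonneg (Int.emod_nonneg _ hn.ne')]
  calc p * ((u * t) % n) ≡ p * (u * t) [ZMOD n] := (Int.mod_modEq _ _).mul_left _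
    _ ≡ t [ZMOD n] := Int.modEq_iff_dvd.mpr ⟨v * t, by linear_combination -t * huv⟩

lemma injOn_rotationSeq (hq : 0 < q) (hpq : IsCoprime p q) (a : ℤ) :
    Set.InjOn (rotationSeq p q) (Set.Icc a (a + p)) := by
  suffices ∀ k ∈ Set.Icc a (a + p), ∀ k' ∈ Set.Icc a (a + p), k < k' →
      rotationSeq p q k ≠ rotationSeq p q k' by
    intro k hk k' hk' heq
    by_contra hne
    rcases lt_or_gt_of_ne hne with hlt | hlt
    exacts [this k hk k' hk' hlt heq, this k' hk' k hk hlt heq.symm]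
  rintro k ⟨hak, hka⟩ k' ⟨hak', hka'⟩ hkk' heq
  have hN : 0 < p + q := by linarith
  obtain ⟨h, hh⟩ := (hpq.add_mul_left_right 1).exists_nat_mul_modEq (by linarith) (-k - 1)
  rw [mul_one, add_comm q] at hh
  have hr : ∀ j, 0 ≤ j + q - 1 → j + q - 1 < p + q →
      (k + j + p * h + q) % (p + q) = j + q - 1 := by
    intro j hj0 hjN
    have hmod := ((hh.add_left (k + j)).add_right q : (k + j + p * h + q) % (p + q) = _ % (p + q))
    rw [hmod, show k + j + (-k - 1) + q = j + q - 1 by ring, Int.emod_eq_of_lt hj0 hjN]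
  have hrk := hr 0 (by omega) (by omega)
  have hrk' := hr (k' - k) (by omega) (by omega)
  rw [add_zero, zero_add] at hrk
  rw [add_sub_cancel] at hrk'
  have h1 := congrFun heq h
  rw [rotationSeq, rotationSeq, hrk, hrk', if_neg (by omega), if_pos (by omega)] at h1
  exact absurd h1 (by decide)

end RotationSeq

lemma floor_mul_mem_Icc {c : ℝ≥0} (hc : c ≤ 1) {d : ℤ} (hd : 0 ≤ d) :
    ⌊(c : ℝ) * d⌋ ∈ Set.Icc 0 d := by
  have hd' : (0 : ℝ) ≤ d := Int.cast_nonneg hd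
  refine ⟨Int.floor_nonneg.2 (by positivity), ?_⟩
  calc ⌊(c : ℝ) * d⌋ ≤ ⌊(d : ℝ)⌋ := Int.floor_le_floor (mul_le_of_le_one_left hd' hc)
    _ = d := Int.floor_intCast d

lemma exists_floor_mul_eq {d k : ℤ} (hd : 0 < d) (hk : k ∈ Set.Icc 0 d) :
    ∃ c : ℝ≥0, c ≤ 1 ∧ ⌊(c : ℝ) * d⌋ = k := by
  obtain ⟨hk0, hkd⟩ := hk
  have hd' : (0 : ℝ) < d := Int.cast_pos.2 hd
  refine ⟨((k : ℝ) / d).toNNReal, ?_, ?_⟩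
  · rw [Real.toNNReal_le_one, div_le_one hd']
    exact_mod_cast hkd
  · rw [Real.coe_toNNReal _ (div_nonneg (Int.cast_nonneg hk0) hd'.le), div_mul_cancel₀ _ hd'.ne',
      Int.floor_intCast]

lemma isStationarySeq_iff_eq_rotationSeq {p1 p2 : ℕ} (hp2 : 0 < p2) (h12 : p2 < p1)
    {c : ℝ≥0} (hc : c ≤ 1) (s : ℕ → Fin 2) :
    IsStationarySeq ![p1, p2] c s ↔ s = rotationSeq p1 p2 ⌊(c : ℝ) * ((p1 - p2 : ℤ) : ℝ)⌋ := by
  obtain ⟨hk0, hk⟩ := floor_mul_mem_Icc hc (d := p1 - p2) (by omega)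
  rw [isStationarySeq_iff_seatRule (by omega) hp2.ne',
    forall_eq_seatRule_iff (by positivity) (by positivity) ⟨by omega, by omega⟩]

/-- For coprime `p_1 > p_2`, there are exactly `p_1 − p_2 + 1` distinct
two-party apportionment sequences arising from stationary divisor methods with
cut points `c ∈ [0,1]`. -/
theorem count_two_party_sequences (p1 p2 : ℕ) (hco : Nat.Coprime p1 p2)
    (hp2 : 0 < p2) (h12 : p2 < p1) :
    Set.ncard { s : ℕ → Fin 2 | ∃ c : NNReal, c ≤ 1 ∧ IsStationarySeq ![p1, p2] c s } =
      p1 - p2 + 1 := by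
  have hseqs : { s : ℕ → Fin 2 | ∃ c : NNReal, c ≤ 1 ∧ IsStationarySeq ![p1, p2] c s } =
      rotationSeq p1 p2 '' Set.Icc 0 (p1 - p2 : ℤ) := by
    ext s
    constructor
    · rintro ⟨c, hc, hs⟩
      exact ⟨_, floor_mul_mem_Icc hc (by omega),
        ((isStationarySeq_iff_eq_rotationSeq hp2 h12 hc s).1 hs).symm⟩
    · rintro ⟨k, hk, rfl⟩
      obtain ⟨c, hc, rfl⟩ := exists_floor_mul_eq (by omega) hk
      exact ⟨c, hc, (isStationarySeq_iff_eq_rotationSeq hp2 h12 hc _).2 rfl⟩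
  have hinj : Set.InjOn (rotationSeq p1 p2) (Set.Icc 0 (p1 - p2 : ℤ)) :=
    (injOn_rotationSeq (by omega) (Nat.isCoprime_iff_coprime.2 hco) 0).mono
      (Set.Icc_subset_Icc le_rfl (by omega))
  rw [hseqs, hinj.ncard_image, ← Finset.coe_Icc, Set.ncard_coe_finset, Int.card_Icc]
  omega
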